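/- arXiv:1907.03024 — 3 statements merged into one kernel-verified Lean document; each statement's English description precedes it below -/
import Mathlib

section
/- Let X be a Hausdorff topological space and let Γ ⊆ Homeo(X) be a subgroup with small supports everywhere. Let f, h ∈ Homeo(X), and suppose there exists a group isomorphism φ : ⟨Γ, f⟩ → ⟨Γ, h⟩ such that φ(γ) = γ for every γ ∈ Γ and φ(f) = h. Then h = f. -/
open Set Topology

variable {X : Type*} [TopologicalSpace X]

/-- The group of self-homeomorphisms of `X`, with `(f * g) x = f (g x)`. -/
instance : Group (X ≃ₜ X) where
  mul f g := g.trans f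
  one := Homeomorph.refl X
  inv := Homeomorph.symm
  mul_assoc _ _ _ := Homeomorph.ext fun _ => rfl
  one_mul _ := Homeomorph.ext fun _ => rfl
  mul_one _ := Homeomorph.ext fun _ => rfl
  inv_mul_cancel f := Homeomorph.ext fun x => f.symm_apply_apply x

/-- The support of a homeomorphism: the closure of the set of non-fixed points. -/
def Supp (f : X ≃ₜ X) : Set X := closure {x | f x ≠ x}

/-- A subgroup `Γ ⊆ Homeo(X)` has small supports everywhere if every nonempty open set
contains the support of some nontrivial element of `Γ`. -/
def SmallSupportsEverywhere (Γ : Subgroup (X ≃ₜ X)) : Prop :=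
  ∀ U : Set X, IsOpen U → U.Nonempty → ∃ γ ∈ Γ, γ ≠ 1 ∧ Supp γ ⊆ U


/-!
If `h ≠ f`, separate `f x` and `h x` by disjoint open sets `U`, `V` and pick `γ ∈ Γ` supported
in `f⁻¹ U ∩ h⁻¹ V`, so that `f γ f⁻¹` is supported in `U` and `h γ h⁻¹ = φ (f γ f⁻¹)` in `V`.
An element `δ ∈ Γ` supported in a small open subset of `U` that `f γ f⁻¹` moves off itself does
not commute with `f γ f⁻¹`, yet commutes with `h γ h⁻¹` since their supports are disjoint.
As `φ` fixes `δ` and preserves commutation, this is impossible.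
-/

namespace Homeomorph

theorem apply_eq_of_notMem_supp {g : X ≃ₜ X} {x : X} (hx : x ∉ Supp g) : g x = x :=
  not_not.1 fun hgx => hx (subset_closure hgx)

theorem supp_eq_empty_iff {g : X ≃ₜ X} : Supp g = ∅ ↔ g = 1 := by
  rw [Supp, closure_empty_iff, eq_empty_iff_forall_notMem, Homeomorph.ext_iff]
  simp only [mem_ofPred_eq, not_not]
  rfl

theorem supp_conj (f g : X ≃ₜ X) : Supp (f * g * f⁻¹) = f '' Supp g := by
  rw [Supp, Supp, f.image_closure, f.image_eq_preimage_symm]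
  congr 1
  ext x
  exact not_congr f.eq_symm_apply.symm

theorem image_supp_self (g : X ≃ₜ X) : g '' Supp g = Supp g := by
  rw [← supp_conj, mul_inv_cancel_right]

theorem apply_mem_supp_iff {g : X ≃ₜ X} {x : X} : g x ∈ Supp g ↔ x ∈ Supp g := by
  conv_lhs => rw [← image_supp_self g]
  exact g.injective.mem_set_image

theorem commute_of_disjoint_supp {g k : X ≃ₜ X} (hgk : Disjoint (Supp g) (Supp k)) :
    Commute g k := by
  refine Homeomorph.ext fun x => ?_
  change g (k x) = k (g x)
  by_cases hx : x ∈ Supp g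
  · have hgx : g x ∈ Supp g := apply_mem_supp_iff.2 hx
    rw [apply_eq_of_notMem_supp (hgk.notMem_of_mem_left hx),
      apply_eq_of_notMem_supp (hgk.notMem_of_mem_left hgx)]
  · have hkx : k x ∉ Supp g := by
      intro hkx
      have hxk : x ∉ Supp k := apply_mem_supp_iff.not.1 (hgk.notMem_of_mem_left hkx)
      exact hx (apply_eq_of_notMem_supp hxk ▸ hkx)
    rw [apply_eq_of_notMem_supp hx, apply_eq_of_notMem_supp hkx]

theorem not_commute_of_supp_subset {g k : X ≃ₜ X} {N : Set X} (hN : Disjoint N (g '' N))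
    (hk : k ≠ 1) (hkN : Supp k ⊆ N) : ¬Commute g k := by
  intro hgk
  have hconj : g * k * g⁻¹ = k := by rw [hgk.eq, mul_inv_cancel_right]
  have hkgN : Supp k ⊆ g '' N := by
    rw [← hconj, supp_conj]
    exact image_mono hkN
  exact hk (supp_eq_empty_iff.1 (subset_empty_iff.1 (hN hkN hkgN)))

theorem exists_isOpen_disjoint_image [T2Space X] {g : X ≃ₜ X} {x : X} (hx : g x ≠ x) :
    ∃ N, IsOpen N ∧ x ∈ N ∧ Disjoint N (g '' N) := by
  obtain ⟨N₁, N₂, hN₁, hN₂, hxN₁, hgxN₂, hN₁₂⟩ := t2_separation hx.symm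
  exact ⟨N₁ ∩ g ⁻¹' N₂, hN₁.inter (hN₂.preimage g.continuous), ⟨hxN₁, hgxN₂⟩,
    hN₁₂.mono inter_subset_left (image_subset_iff.2 inter_subset_right)⟩

end Homeomorph

open Homeomorph

theorem SmallSupportsEverywhere.exists_not_commute_conj_commute_conj [T2Space X]
    {Γ : Subgroup (X ≃ₜ X)} (hΓ : SmallSupportsEverywhere Γ) {f h : X ≃ₜ X} (hfh : f ≠ h) :
    ∃ γ ∈ Γ, ∃ δ ∈ Γ, ¬Commute (f * γ * f⁻¹) δ ∧ Commute (h * γ * h⁻¹) δ := by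
  obtain ⟨x, hx⟩ : ∃ x, f x ≠ h x := not_forall.1 fun hfh' => hfh (Homeomorph.ext hfh')
  obtain ⟨U, V, hU, hV, hfxU, hhxV, hUV⟩ := t2_separation hx
  obtain ⟨γ, hγΓ, hγ, hγW⟩ := hΓ (f ⁻¹' U ∩ h ⁻¹' V)
    ((hU.preimage f.continuous).inter (hV.preimage h.continuous)) ⟨x, hfxU, hhxV⟩
  have hfγ : Supp (f * γ * f⁻¹) ⊆ U := by
    rw [supp_conj, image_subset_iff]
    exact hγW.trans inter_subset_left
  have hhγ : Supp (h * γ * h⁻¹) ⊆ V := by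
    rw [supp_conj, image_subset_iff]
    exact hγW.trans inter_subset_right
  obtain ⟨y, hy⟩ : ∃ y, (f * γ * f⁻¹) y ≠ y := by
    by_contra! hfix
    exact hγ (conj_eq_one_iff.1 (Homeomorph.ext hfix))
  obtain ⟨N, hN, hyN, hNdisj⟩ := exists_isOpen_disjoint_image hy
  obtain ⟨δ, hδΓ, hδ, hδN⟩ := hΓ (N ∩ U) (hN.inter hU) ⟨y, hyN, hfγ (subset_closure hy)⟩
  refine ⟨γ, hγΓ, δ, hδΓ, ?_, ?_⟩
  · exact not_commute_of_supp_subset (hNdisj.mono inter_subset_left (image_mono inter_subset_left))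
      hδ hδN
  · exact commute_of_disjoint_supp (hUV.symm.mono hhγ (hδN.trans inter_subset_right))

theorem MulEquiv.commute_coe_iff {G : Type*} [Group G] {H K : Subgroup G} (φ : H ≃* K)
    {a b : H} : Commute (φ a : G) (φ b) ↔ Commute (a : G) b :=
  (commute_map_iff (f := K.subtype.comp φ.toMonoidHom)
      (Subtype.val_injective.comp φ.injective)).trans
    (commute_map_iff (f := H.subtype) Subtype.val_injective).symm

theorem map_recognition_small_supports
    {X : Type*} [TopologicalSpace X] [T2Space X]
    (Γ : Subgroup (X ≃ₜ X)) (hΓ : SmallSupportsEverywhere Γ)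
    (f h : X ≃ₜ X)
    (φ : Subgroup.closure ((Γ : Set (X ≃ₜ X)) ∪ {f}) ≃*
         Subgroup.closure ((Γ : Set (X ≃ₜ X)) ∪ {h}))
    (hφΓ : ∀ (γ : X ≃ₜ X) (hγ : γ ∈ Γ),
      ((φ ⟨γ, Subgroup.subset_closure (Set.mem_union_left _ hγ)⟩ : _) : X ≃ₜ X) = γ)
    (hφf : ((φ ⟨f, Subgroup.subset_closure
        (Set.mem_union_right _ (Set.mem_singleton f))⟩ : _) : X ≃ₜ X) = h) :
    h = f := by
  by_contra hhf
  obtain ⟨γ, hγ, δ, hδ, hfγδ, hhγδ⟩ := hΓ.exists_not_commute_conj_commute_conj (Ne.symm hhf)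
  let F : Subgroup.closure ((Γ : Set (X ≃ₜ X)) ∪ {f}) :=
    ⟨f, Subgroup.subset_closure (Set.mem_union_right _ (Set.mem_singleton f))⟩
  let C : Subgroup.closure ((Γ : Set (X ≃ₜ X)) ∪ {f}) :=
    ⟨γ, Subgroup.subset_closure (Set.mem_union_left _ hγ)⟩
  let D : Subgroup.closure ((Γ : Set (X ≃ₜ X)) ∪ {f}) :=
    ⟨δ, Subgroup.subset_closure (Set.mem_union_left _ hδ)⟩
  have hφFCF : (φ (F * C * F⁻¹) : X ≃ₜ X) = h * γ * h⁻¹ := by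
    simp only [map_mul, map_inv, Subgroup.coe_mul, Subgroup.coe_inv, F, C, hφf, hφΓ γ hγ]
  have hφD : (φ D : X ≃ₜ X) = δ := hφΓ δ hδ
  refine hfγδ ((φ.commute_coe_iff (a := F * C * F⁻¹) (b := D)).1 ?_)
  rwa [hφFCF, hφD]
end

section
/- Let X be a Hausdorff topological space without isolated points and let Γ ⊆ Homeo(X) be a subgroup with the contraction property. Let f, h ∈ Homeo(X), and suppose there exists a group isomorphism φ : ⟨Γ, f⟩ → ⟨Γ, h⟩ such that φ(γ) = γ for every γ ∈ Γ and φ(f) = h. Then Supp(f) = Supp(h). -/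
open Set Topology

variable {X : Type*} [TopologicalSpace X]

/-- A subgroup `Γ ⊆ Homeo(X)` has the contraction property if for every nonempty open set
`U` there is `γ ∈ Γ` with `γ(X ∖ U) ⊆ U`. -/
def ContractionProperty (Γ : Subgroup (X ≃ₜ X)) : Prop :=
  ∀ U : Set X, IsOpen U → U.Nonempty → ∃ γ ∈ Γ, γ '' Uᶜ ⊆ U

/-! Since `φ` fixes `Γ` and sends `f` to `h`, for `γ ∈ Γ` the elements `f` and `γ f γ⁻¹` commute
iff `h` and `γ h γ⁻¹` do, and this commutation detects the support. If `h` fixes the open set `U`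
pointwise and `γ` contracts into `U`, then `γ h γ⁻¹` is supported in `U` and commutes with `h`.
If `f` moves a point of `U`, pick an open `V ⊆ U` with `f(V) ∩ V = ∅` and a smaller nonempty
open `W ⊊ V` (there are no isolated points); if `γ` contracts `Wᶜ` into `W`, then `f γ f γ⁻¹`
and `γ f γ⁻¹ f` send `γ z`, for `z ∈ V ∖ W`, to points outside and inside `V` respectively. -/

theorem MulEquiv.commute_iff {M N : Type*} [Mul M] [Mul N] (e : M ≃* N) (x y : M) :
    Commute (e x) (e y) ↔ Commute x y :=
  ⟨fun hc => by simpa using hc.map e.symm, fun hc => hc.map e⟩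

namespace Homeomorph

theorem commute_of_disjoint_movedSets {g k : X ≃ₜ X}
    (hd : Disjoint {x | g x ≠ x} {x | k x ≠ x}) : Commute g k := by
  have hperm : Commute g.toEquiv k.toEquiv := Equiv.Perm.Disjoint.commute fun x => by
    by_contra! hx
    exact hd.ne_of_mem hx.1 hx.2 rfl
  exact Homeomorph.ext fun x => congrFun (congrArg DFunLike.coe hperm.eq) x

theorem movedSet_conj_subset (γ h : X ≃ₜ X) :
    {x | (γ * h * γ⁻¹) x ≠ x} ⊆ γ '' {x | h x ≠ x} := fun x hx =>
  ⟨γ.symm x, fun hfix => hx (congrArg γ hfix |>.trans (γ.apply_symm_apply x)),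
    γ.apply_symm_apply x⟩

theorem commute_conj_of_disjoint_image {γ h : X ≃ₜ X}
    (hd : Disjoint (γ '' {x | h x ≠ x}) {x | h x ≠ x}) : Commute h (γ * h * γ⁻¹) :=
  (commute_of_disjoint_movedSets (hd.mono_left (movedSet_conj_subset γ h))).symm

theorem not_commute_conj {f γ : X ≃ₜ X} {V W : Set X} {z : X} (hf : MapsTo f V Vᶜ)
    (hWV : W ⊆ V) (hzV : z ∈ V) (hzW : z ∉ W) (hγ : MapsTo γ Wᶜ W) :
    ¬Commute f (γ * f * γ⁻¹) := by
  have hγinv : MapsTo γ.symm Wᶜ W := fun y hy => by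
    by_contra hyW
    exact hy (by simpa using hγ hyW)
  have hVW : Vᶜ ⊆ Wᶜ := compl_subset_compl.mpr hWV
  intro hc
  have hleft : f (γ (f z)) ∈ Vᶜ := hf (hWV (hγ (hVW (hf hzV))))
  have hright : γ (f (γ.symm (f (γ z)))) ∈ V :=
    hWV (hγ (hVW (hf (hWV (hγinv (hVW (hf (hWV (hγ hzW)))))))))
  have heq : f (γ (f z)) = γ (f (γ.symm (f (γ z)))) := by
    simpa using DFunLike.congr_fun hc.eq (γ z)
  exact hleft (heq ▸ hright)

end Homeomorph

theorem exists_isOpen_mapsTo_compl [T2Space X] {f : X → X} (hf : Continuous f) {U : Set X}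
    (hU : IsOpen U) {z : X} (hzU : z ∈ U) (hz : f z ≠ z) :
    ∃ V ⊆ U, IsOpen V ∧ z ∈ V ∧ MapsTo f V Vᶜ := by
  obtain ⟨B, A, hB, hA, hfzB, hzA, hAB⟩ := t2_separation hz
  refine ⟨U ∩ A ∩ f ⁻¹' B, fun y hy => hy.1.1, (hU.inter hA).inter (hB.preimage hf),
    ⟨⟨hzU, hzA⟩, hfzB⟩, fun y hy hfy => ?_⟩
  exact hAB.ne_of_mem hy.2 hfy.1.2 rfl

theorem IsOpen.exists_isOpen_ssubset [T1Space X] (hX : ∀ x : X, ¬IsOpen ({x} : Set X))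
    {V : Set X} (hV : IsOpen V) (hne : V.Nonempty) :
    ∃ W ⊆ V, IsOpen W ∧ W.Nonempty ∧ ∃ z ∈ V, z ∉ W := by
  obtain ⟨x, hxV⟩ := hne
  obtain ⟨z, hzV, hzx⟩ : ∃ z ∈ V, z ≠ x := by
    by_contra! hsub
    exact hX x (by rwa [(eq_singleton_iff_unique_mem.mpr ⟨hxV, hsub⟩).symm])
  exact ⟨V \ {z}, sdiff_subset, hV.sdiff isClosed_singleton, ⟨x, hxV, hzx.symm⟩, z, hzV,
    fun hz => hz.2 rfl⟩

theorem ContractionProperty.exists_commute_conj_not_commute_conj [T2Space X]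
    (hX : ∀ x : X, ¬IsOpen ({x} : Set X)) {Γ : Subgroup (X ≃ₜ X)} (hΓ : ContractionProperty Γ)
    {f h : X ≃ₜ X} {U : Set X} (hU : IsOpen U) (hhU : Disjoint U {x | h x ≠ x}) {z : X}
    (hzU : z ∈ U) (hz : f z ≠ z) :
    ∃ γ ∈ Γ, Commute h (γ * h * γ⁻¹) ∧ ¬Commute f (γ * f * γ⁻¹) := by
  obtain ⟨V, hVU, hV, hzV, hfV⟩ := exists_isOpen_mapsTo_compl f.continuous hU hzU hz
  obtain ⟨W, hWV, hW, hWne, w, hwV, hwW⟩ := hV.exists_isOpen_ssubset hX ⟨z, hzV⟩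
  obtain ⟨γ, hγΓ, hγ⟩ := hΓ W hW hWne
  have hγ' : MapsTo γ Wᶜ W := mapsTo_iff_image_subset.mpr hγ
  have hmoved : {x | h x ≠ x} ⊆ Wᶜ := fun x hx hxW => hhU.ne_of_mem (hWV.trans hVU hxW) hx rfl
  refine ⟨γ, hγΓ, Homeomorph.commute_conj_of_disjoint_image ?_,
    Homeomorph.not_commute_conj hfV hWV hwV hwW hγ'⟩
  exact hhU.mono_left ((image_mono hmoved).trans (hγ.trans (hWV.trans hVU)))

theorem ContractionProperty.supp_subset_of_commute_conj_imp [T2Space X]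
    (hX : ∀ x : X, ¬IsOpen ({x} : Set X)) {Γ : Subgroup (X ≃ₜ X)} (hΓ : ContractionProperty Γ)
    {f h : X ≃ₜ X}
    (hfh : ∀ γ ∈ Γ, Commute h (γ * h * γ⁻¹) → Commute f (γ * f * γ⁻¹)) :
    Supp f ⊆ Supp h := by
  intro x hxf
  by_contra hxh
  obtain ⟨z, hzU, hz⟩ := mem_closure_iff.mp hxf _ isClosed_closure.isOpen_compl hxh
  have hhU : Disjoint (Supp h)ᶜ {x | h x ≠ x} := disjoint_compl_left_iff_subset.mpr subset_closure
  obtain ⟨γ, hγ, hch, hcf⟩ := hΓ.exists_commute_conj_not_commute_conj hX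
    isClosed_closure.isOpen_compl hhU hzU hz
  exact hcf (hfh γ hγ hch)

theorem supp_eq_of_iso_contraction
    {X : Type*} [TopologicalSpace X] [T2Space X]
    (hX : ∀ x : X, ¬ IsOpen ({x} : Set X))
    (Γ : Subgroup (X ≃ₜ X)) (hΓ : ContractionProperty Γ)
    (f h : X ≃ₜ X)
    (φ : Subgroup.closure ((Γ : Set (X ≃ₜ X)) ∪ {f}) ≃*
         Subgroup.closure ((Γ : Set (X ≃ₜ X)) ∪ {h}))
    (hφΓ : ∀ (γ : X ≃ₜ X) (hγ : γ ∈ Γ),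
      ((φ ⟨γ, Subgroup.subset_closure (Set.mem_union_left _ hγ)⟩ : _) : X ≃ₜ X) = γ)
    (hφf : ((φ ⟨f, Subgroup.subset_closure
        (Set.mem_union_right _ (Set.mem_singleton f))⟩ : _) : X ≃ₜ X) = h) :
    Supp f = Supp h := by
  have key : ∀ γ ∈ Γ, Commute h (γ * h * γ⁻¹) ↔ Commute f (γ * f * γ⁻¹) := fun γ hγ => by
    let f' : Subgroup.closure ((Γ : Set (X ≃ₜ X)) ∪ {f}) :=
      ⟨f, Subgroup.subset_closure (Set.mem_union_right _ (Set.mem_singleton f))⟩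
    let γ' : Subgroup.closure ((Γ : Set (X ≃ₜ X)) ∪ {f}) :=
      ⟨γ, Subgroup.subset_closure (Set.mem_union_left _ hγ)⟩
    have hφ := φ.commute_iff f' (γ' * f' * γ'⁻¹)
    simp only [map_mul, map_inv, ← Submonoid.commute_coe_coe, Subgroup.coe_mul,
      Subgroup.coe_inv] at hφ
    rwa [show (φ f' : X ≃ₜ X) = h from hφf, show (φ γ' : X ≃ₜ X) = γ from hφΓ γ hγ] at hφ
  exact (hΓ.supp_subset_of_commute_conj_imp hX fun γ hγ => (key γ hγ).mp).antisymm
    (hΓ.supp_subset_of_commute_conj_imp hX fun γ hγ => (key γ hγ).mpr)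
end

section
/- Let u, v, w ∈ Homeo₊(ℝ). Suppose that u and v commute, that u(x) ≠ x and v(x) ≠ x for every x ∈ ℝ (i.e. u and v have no fixed points), that u(x) < v(x) for every x ∈ ℝ, and that w ∘ u ∘ w⁻¹ = v. Then w has a fixed point, i.e. there exists x ∈ ℝ with w(x) = x. -/
open Filter Function Set

/-!
Put `h = u⁻¹ v`. Then `x < h x` for all `x`, `h` commutes with `u`, and `w u = u h w`, hence
`w uⁿ = uⁿ hⁿ w` for every `n : ℤ`; since `uⁿ` is increasing, comparing `w` with the identity at
`uⁿ 0` amounts to comparing `hⁿ (w 0)` with `0`. A fixed-point-free `w` lies entirely above or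
entirely below the identity (intermediate value theorem), so `hⁿ (w 0)` would stay on one side of
`0` for all `n : ℤ`. But the `⟨h⟩`-orbit of a point is unbounded in both directions: a bounded
increasing orbit `hⁿ x` would converge to a fixed point of `h`.
-/

theorem Homeomorph.coe_pow {X : Type*} [TopologicalSpace X] (f : X ≃ₜ X) (n : ℕ) :
    ⇑(f ^ n) = f^[n] := by
  induction n with
  | zero => rfl
  | succ n ih => rw [pow_succ, iterate_succ, ← ih]; rfl

section LinearOrder

variable {α : Type*} [LinearOrder α] [TopologicalSpace α]

theorem Continuous.forall_lt_apply_or_forall_apply_lt [OrderClosedTopology α]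
    [PreconnectedSpace α] {f : α → α} (hf : Continuous f) (hne : ∀ x, f x ≠ x) :
    (∀ x, x < f x) ∨ (∀ x, f x < x) := by
  have hle : {x | x < f x} = {x | x ≤ f x} :=
    Set.ext fun x => ⟨le_of_lt, fun h => h.lt_of_ne (hne x).symm⟩
  have hclopen : IsClopen {x | x < f x} :=
    ⟨hle ▸ isClosed_le continuous_id hf, isOpen_lt continuous_id hf⟩
  rcases isClopen_iff.1 hclopen with hempty | huniv
  · exact .inr fun x => (not_lt.1 (eq_empty_iff_forall_notMem.1 hempty x)).lt_of_ne (hne x)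
  · exact .inl (eq_univ_iff_forall.1 huniv)

namespace Homeomorph

variable (α) in
def strictMonoSubgroup : Subgroup (α ≃ₜ α) where
  carrier := {f | StrictMono f}
  mul_mem' hf hg := hf.comp hg
  one_mem' := strictMono_id
  inv_mem' {f} hf a b hab := hf.lt_iff_lt.1 (by simpa using hab)

end Homeomorph

end LinearOrder

theorem tendsto_iterate_atTop_of_forall_lt_apply {α : Type*} [ConditionallyCompleteLinearOrder α]
    [TopologicalSpace α] [OrderTopology α] {f : α → α} (hf : Continuous f)
    (hlt : ∀ x, x < f x) (x : α) : Tendsto (fun n => f^[n] x) atTop atTop := by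
  have hmono : Monotone fun n => f^[n] x :=
    monotone_nat_of_le_succ fun n => by rw [iterate_succ_apply']; exact (hlt _).le
  refine tendsto_atTop_atTop_of_monotone' hmono fun hbdd => ?_
  exact (hlt _).ne' (isFixedPt_of_tendsto_iterate (tendsto_atTop_ciSup hmono hbdd) hf.continuousAt)

namespace Homeomorph

variable {α : Type*} [ConditionallyCompleteLinearOrder α] [TopologicalSpace α] [OrderTopology α]
  {h : α ≃ₜ α}

theorem exists_lt_zpow_apply (hlt : ∀ x, x < h x) (x y : α) : ∃ n : ℤ, y < (h ^ n) x := by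
  obtain ⟨n, hn⟩ :=
    ((tendsto_iterate_atTop_of_forall_lt_apply h.continuous hlt x).eventually_ge_atTop (h y)).exists
  exact ⟨n, by rw [zpow_natCast, coe_pow]; exact (hlt y).trans_le hn⟩

theorem exists_zpow_apply_lt (hh : StrictMono h) (hlt : ∀ x, x < h x) (x y : α) :
    ∃ n : ℤ, (h ^ n) x < y := by
  obtain ⟨n, hn⟩ := exists_lt_zpow_apply hlt y x
  refine ⟨-n, ?_⟩
  have hmono : StrictMono ⇑(h ^ (-n)) := (strictMonoSubgroup α).zpow_mem hh (-n)
  simpa [← mul_apply, ← zpow_add] using hmono hn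

end Homeomorph

open Homeomorph in
theorem conjugator_has_fixed_point_general
    (u v w : ℝ ≃ₜ ℝ)
    (hu : StrictMono u) (hv : StrictMono v)
    (hcomm : ∀ x : ℝ, u (v x) = v (u x))
    (huv : ∀ x : ℝ, u x < v x)
    (hconj : ∀ x : ℝ, w (u (w.symm x)) = v x) :
    ∃ x : ℝ, w x = x := by
  set G := strictMonoSubgroup ℝ
  set h := u⁻¹ * v
  have hh : StrictMono h := G.mul_mem (G.inv_mem hu) hv
  have hun (n : ℤ) : StrictMono ⇑(u ^ n) := G.zpow_mem hu n
  have hlt (x : ℝ) : x < h x := hu.lt_iff_lt.1 (by simpa [h] using huv x)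
  have huh : Commute u h := (Commute.refl u).inv_right.mul_right (Homeomorph.ext hcomm)
  have hsemi : SemiconjBy w u (u * h) := by
    rw [mul_inv_cancel_left]; exact Homeomorph.ext fun x => by simpa using hconj (w x)
  have hwu (n : ℤ) (x : ℝ) : w ((u ^ n) x) = (u ^ n) ((h ^ n) (w x)) := by
    rw [← mul_apply, (hsemi.zpow_right n).eq, huh.mul_zpow]; rfl
  by_contra! hfix
  rcases w.continuous.forall_lt_apply_or_forall_apply_lt hfix with hw | hw
  · obtain ⟨n, hn⟩ := exists_zpow_apply_lt hh hlt (w 0) 0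
    exact hn.not_gt ((hun n).lt_iff_lt.1 (hwu n 0 ▸ hw ((u ^ n) 0)))
  · obtain ⟨n, hn⟩ := exists_lt_zpow_apply hlt (w 0) 0
    exact hn.not_gt ((hun n).lt_iff_lt.1 (hwu n 0 ▸ hw ((u ^ n) 0)))

theorem conjugator_has_fixed_point
    (u v w : ℝ ≃ₜ ℝ)
    (hu : StrictMono u) (hv : StrictMono v) (hw : StrictMono w)
    (hcomm : ∀ x : ℝ, u (v x) = v (u x))
    (hufix : ∀ x : ℝ, u x ≠ x) (hvfix : ∀ x : ℝ, v x ≠ x)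
    (huv : ∀ x : ℝ, u x < v x)
    (hconj : ∀ x : ℝ, w (u (w.symm x)) = v x) :
    ∃ x : ℝ, w x = x :=
  conjugator_has_fixed_point_general u v w hu hv hcomm huv hconj
end
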